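/- arXiv:0903.2098 — 2 statements merged into one kernel-verified Lean document; each statement's English description precedes it below -/
import Mathlib

section
/- Let A be a commutative ℂ-algebra, φ : A → ℂ a ℂ-linear map, z, σ, L elements of A, n ≥ 1 a natural number, and c, q_z, q_σ, q_{zσ}, q_{σL} complex numbers. Assume that for all complex numbers s and t one has φ((z + s·σ + t·L)^{2n}) = c·(q_z + q_σ·s^2 + 2·q_{zσ}·s + 2·q_{σL}·s·t)^n. Then φ(z·σ^{n-1}·L^n) = 0. -/
open Finset Polynomial

lemma poly_coeff_ext {N : ℕ} (a b : ℕ → ℂ)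
    (h : ∀ x : ℂ, ∑ k ∈ Finset.range N, a k * x ^ k
        = ∑ k ∈ Finset.range N, b k * x ^ k) :
    ∀ k < N, a k = b k := by
  have hpq : (∑ k ∈ Finset.range N, Polynomial.C (a k) * Polynomial.X ^ k)
      = ∑ k ∈ Finset.range N, Polynomial.C (b k) * Polynomial.X ^ k := by
    apply Polynomial.funext
    intro x
    simpa [Polynomial.eval_finset_sum] using h x
  intro k hk
  have h2 := congrArg (fun p => Polynomial.coeff p k) hpq
  simpa [Polynomial.finset_sum_coeff, Polynomial.coeff_C_mul,
    Polynomial.coeff_X_pow, Finset.sum_ite_eq', hk] using h2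

/-- Algebraic content of Lemma 2.2: if  the Fujiki relation
`φ((z + s·σ + t·L)^{2n}) = c·(q_z + q_σ·s² + 2·q_{zσ}·s + 2·q_{σL}·s·t)^n`
holds for all `s t : ℂ`, then `φ(z·σ^{n-1}·L^n) = 0`. -/
theorem lagrangian_vanishing_one
    {A : Type*} [CommRing A] [Algebra ℂ A] (φ : A →ₗ[ℂ] ℂ)
    (z σ L : A) (n : ℕ) (hn : 1 ≤ n) (c qz qσ qzσ qσL : ℂ)
    (hF : ∀ s t : ℂ,
      φ ((z + s • σ + t • L) ^ (2 * n))
        = c * (qz + qσ * s ^ 2 + 2 * qzσ * s + 2 * qσL * s * t) ^ n) :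
    φ (z * σ ^ (n - 1) * L ^ n) = 0 := by
  -- Step 1: extract the coefficient of t^n
  have key1 : ∀ s : ℂ,
      (((2*n).choose n : ℕ) : ℂ) * φ (L ^ n * (z + s • σ) ^ n)
        = c * (2 * qσL * s) ^ n := by
    intro s
    have hx : ∀ x : ℂ,
        ∑ k ∈ Finset.range (2*n+1),
            ((((2*n).choose k : ℕ) : ℂ) * φ (L ^ k * (z + s • σ) ^ (2*n - k))) * x ^ k
        = ∑ k ∈ Finset.range (2*n+1),
            (if k ≤ n then
              c * ((2 * qσL * s) ^ k * (qz + qσ * s ^ 2 + 2 * qzσ * s) ^ (n - k)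
                * ((n.choose k : ℕ) : ℂ)) else 0) * x ^ k := by
      intro x
      have lhs : φ ((z + s • σ + x • L) ^ (2*n))
          = ∑ k ∈ Finset.range (2*n+1),
              ((((2*n).choose k : ℕ) : ℂ) * φ (L ^ k * (z + s • σ) ^ (2*n - k))) * x ^ k := by
        rw [show z + s • σ + x • L = x • L + (z + s • σ) from by ring, add_pow, map_sum]
        refine Finset.sum_congr rfl fun k hk => ?_
        have e2 : (x • L) ^ k * (z + s • σ) ^ (2*n - k) * (((2*n).choose k : ℕ) : A)
            = (x ^ k * (((2*n).choose k : ℕ) : ℂ)) • (L ^ k * (z + s • σ) ^ (2*n - k)) := by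
          simp only [_root_.smul_pow, Algebra.smul_def, map_mul, map_pow, map_natCast]
          ring
        rw [e2, map_smul, smul_eq_mul]; ring
      have rhs : c * (qz + qσ * s ^ 2 + 2 * qzσ * s + 2 * qσL * s * x) ^ n
          = ∑ k ∈ Finset.range (2*n+1),
              (if k ≤ n then
                c * ((2 * qσL * s) ^ k * (qz + qσ * s ^ 2 + 2 * qzσ * s) ^ (n - k)
                  * ((n.choose k : ℕ) : ℂ)) else 0) * x ^ k := by
        rw [show qz + qσ * s ^ 2 + 2 * qzσ * s + 2 * qσL * s * x
            = (2 * qσL * s) * x + (qz + qσ * s ^ 2 + 2 * qzσ * s) from by ring,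
          add_pow, Finset.mul_sum,
          ← Finset.sum_subset (Finset.range_subset_range.mpr (by omega : n+1 ≤ 2*n+1))
            (fun k hk hk2 => by
              simp only [Finset.mem_range] at hk hk2
              rw [if_neg (by omega), zero_mul])]
        refine Finset.sum_congr rfl fun k hk => ?_
        have hkn : k ≤ n := Nat.lt_succ_iff.mp (Finset.mem_range.mp hk)
        rw [if_pos hkn, mul_pow]; ring
      rw [← lhs, ← rhs, hF s x]
    have h := poly_coeff_ext _ _ hx n (by omega)
    simpa [two_mul, Nat.add_sub_cancel] using h
  -- Step 2: extract the coefficient of s^(n-1)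
  have hx2 : ∀ s : ℂ,
      ∑ j ∈ Finset.range (n+1),
          ((((2*n).choose n : ℕ) : ℂ) * (((n.choose j : ℕ) : ℂ))
            * φ (L ^ n * (σ ^ j * z ^ (n - j)))) * s ^ j
      = ∑ j ∈ Finset.range (n+1),
          (if j = n then c * (2 * qσL) ^ n else 0) * s ^ j := by
    intro s
    have lhs : (((2*n).choose n : ℕ) : ℂ) * φ (L ^ n * (z + s • σ) ^ n)
        = ∑ j ∈ Finset.range (n+1),
            ((((2*n).choose n : ℕ) : ℂ) * (((n.choose j : ℕ) : ℂ))
              * φ (L ^ n * (σ ^ j * z ^ (n - j)))) * s ^ j := by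
      rw [show z + s • σ = s • σ + z from by ring, add_pow, Finset.mul_sum, map_sum, Finset.mul_sum]
      refine Finset.sum_congr rfl fun j hj => ?_
      have e2 : (s • σ) ^ j * z ^ (n - j) * ((n.choose j : ℕ) : A)
          = (s ^ j * ((n.choose j : ℕ) : ℂ)) • (σ ^ j * z ^ (n - j)) := by
        simp only [_root_.smul_pow, Algebra.smul_def, map_mul, map_pow, map_natCast]
        ring
      rw [e2, mul_smul_comm, map_smul, smul_eq_mul]; ring
    have rhs : c * (2 * qσL * s) ^ n
        = ∑ j ∈ Finset.range (n+1),
            (if j = n then c * (2 * qσL) ^ n else 0) * s ^ j := by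
      rw [Finset.sum_eq_single n (fun b _ hb => by rw [if_neg hb, zero_mul])
        (fun h => absurd (Finset.self_mem_range_succ n) h), if_pos rfl, mul_pow]
      ring
    rw [← lhs, ← rhs, key1 s]
  have h2 := poly_coeff_ext _ _ hx2 (n-1) (by omega)
  rw [if_neg (by omega : ¬ n - 1 = n)] at h2
  have hns : n - (n - 1) = 1 := by omega
  rw [hns, pow_one] at h2
  have hne : (((2*n).choose n : ℕ) : ℂ) * (((n.choose (n-1) : ℕ) : ℂ)) ≠ 0 :=
    mul_ne_zero (Nat.cast_ne_zero.mpr (Nat.choose_pos (by omega)).ne')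
      (Nat.cast_ne_zero.mpr (Nat.choose_pos (by omega)).ne')
  have hφ : φ (L ^ n * (σ ^ (n-1) * z)) = 0 := by
    rcases mul_eq_zero.mp h2 with h | h
    · exact absurd h hne
    · exact h
  rw [show z * σ ^ (n - 1) * L ^ n = L ^ n * (σ ^ (n - 1) * z) from by ring]
  exact hφ
end

section
/- Let A be a commutative ℂ-algebra, φ : A → ℂ a ℂ-linear map, z, σ, L elements of A, n ≥ 2 a natural number, and c, q_z, q_σ, q_{zσ}, q_{σL} complex numbers. Assume that for all complex numbers s and t one has φ((z + s·σ + t·L)^{2n}) = c·(q_z + q_σ·s^2 + 2·q_{zσ}·s + 2·q_{σL}·s·t)^n. Then φ(z^2·σ^{n-2}·L^n) = 0. -/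
open Polynomial Finset

lemma phi_expand {A : Type*} [CommRing A] [Algebra ℂ A] (φ : A →ₗ[ℂ] ℂ)
    (x y w : A) (m : ℕ) (t : ℂ) :
    φ ((x + t • y) ^ m * w)
      = ∑ k ∈ range (m + 1), (m.choose k : ℂ) * φ (x ^ k * y ^ (m - k) * w) * t ^ (m - k) := by
  rw [add_pow, Finset.sum_mul, map_sum]
  refine Finset.sum_congr rfl fun k _ => ?_
  have h : x ^ k * (t • y) ^ (m - k) * (m.choose k : A) * w
      = ((m.choose k : ℂ) * t ^ (m - k)) • (x ^ k * y ^ (m - k) * w) := by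
    simp only [_root_.smul_pow, Algebra.smul_def, map_mul, map_pow, map_natCast]
    ring
  rw [h, map_smul, smul_eq_mul]
  ring

lemma coeff_sum_extract (m : ℕ) (f : ℕ → ℂ) (i : ℕ) (hi : i ≤ m) :
    (∑ j ∈ range (m + 1), Polynomial.C (f j) * Polynomial.X ^ (m - j)).coeff (m - i) = f i := by
  rw [Polynomial.finset_sum_coeff]
  rw [Finset.sum_eq_single i]
  · simp [Polynomial.coeff_C_mul, Polynomial.coeff_X_pow]
  · intro j hj hji
    have hjm : j ≤ m := by simp at hj; omega
    have : m - i ≠ m - j := by omega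
    simp [Polynomial.coeff_C_mul, Polynomial.coeff_X_pow, this]
  · intro h
    exact absurd (by simp; omega) h

/-- Algebraic content of Lemma 2.2: if the Fujiki relation
`φ((z + s·σ + t·L)^{2n}) = c·(q_z + q_σ·s² + 2·q_{zσ}·s + 2·q_{σL}·s·t)^n`
holds for all `s t : ℂ`, then `φ(z²·σ^{n-2}·L^n) = 0`. -/
theorem lagrangian_vanishing_two
    {A : Type*} [CommRing A] [Algebra ℂ A] (φ : A →ₗ[ℂ] ℂ)
    (z σ L : A) (n : ℕ) (hn : 2 ≤ n) (c qz qσ qzσ qσL : ℂ)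
    (hF : ∀ s t : ℂ,
      φ ((z + s • σ + t • L) ^ (2 * n))
        = c * (qz + qσ * s ^ 2 + 2 * qzσ * s + 2 * qσL * s * t) ^ n) :
    φ (z ^ 2 * σ ^ (n - 2) * L ^ n) = 0 := by
  have step1 : ∀ s : ℂ, ((2 * n).choose n : ℂ) * φ ((z + s • σ) ^ n * L ^ n)
      = c * (2 * qσL * s) ^ n := by
    intro s
    set a : ℂ := qz + qσ * s ^ 2 + 2 * qzσ * s with ha
    set b : ℂ := 2 * qσL * s with hb
    set p : ℂ[X] := ∑ k ∈ range (2 * n + 1),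
      Polynomial.C (((2 * n).choose k : ℂ) * φ ((z + s • σ) ^ k * L ^ (2 * n - k) * 1))
        * Polynomial.X ^ (2 * n - k) with hp
    set q : ℂ[X] := ∑ j ∈ range (n + 1),
      Polynomial.C (c * (n.choose j : ℂ) * a ^ j * b ^ (n - j)) * Polynomial.X ^ (n - j) with hq
    have hpq : p = q := by
      apply Polynomial.funext
      intro t
      have hevp : p.eval t = φ ((z + s • σ + t • L) ^ (2 * n)) := by
        rw [show φ ((z + s • σ + t • L) ^ (2 * n))
              = φ ((z + s • σ + t • L) ^ (2 * n) * 1) by rw [mul_one]]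
        rw [phi_expand φ (z + s • σ) L 1 (2 * n) t, hp]
        simp [Polynomial.eval_finset_sum]
      have hevq : q.eval t = c * (a + b * t) ^ n := by
        rw [hq, add_pow]
        simp [Polynomial.eval_finset_sum, Finset.mul_sum]
        refine Finset.sum_congr rfl fun j _ => ?_
        ring
      rw [hevp, hevq, hF s t]
    have h1 := congrArg (fun r => Polynomial.coeff r (2 * n - n)) hpq
    simp only [hp, hq] at h1
    rw [coeff_sum_extract (2 * n) _ n (by omega)] at h1
    have h2n : (2 : ℕ) * n - n = n - 0 := by omega
    rw [h2n, coeff_sum_extract n _ 0 (by omega)] at h1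
    simp at h1
    exact h1
  -- Step 2
  set P : ℂ[X] := ∑ j ∈ range (n + 1),
    Polynomial.C (((2 * n).choose n : ℂ) * (n.choose j : ℂ) * φ (z ^ j * σ ^ (n - j) * L ^ n))
      * Polynomial.X ^ (n - j) with hP
  set Q : ℂ[X] := Polynomial.C (c * (2 * qσL) ^ n) * Polynomial.X ^ n with hQ
  have hPQ : P = Q := by
    apply Polynomial.funext
    intro s
    have hevP : P.eval s = ((2 * n).choose n : ℂ) * φ ((z + s • σ) ^ n * L ^ n) := by
      rw [phi_expand φ z σ (L ^ n) n s, hP]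
      simp [Polynomial.eval_finset_sum, Finset.mul_sum]
      refine Finset.sum_congr rfl fun j _ => ?_
      ring
    rw [hevP, step1 s, hQ]
    simp [mul_pow]
    ring
  have h1 := congrArg (fun r => Polynomial.coeff r (n - 2)) hPQ
  simp only [hP, hQ] at h1
  rw [coeff_sum_extract n _ 2 hn] at h1
  have hne : n - 2 ≠ n := by omega
  rw [Polynomial.coeff_C_mul, Polynomial.coeff_X_pow, if_neg hne] at h1
  have hcn : ((2 * n).choose n : ℂ) ≠ 0 := by
    exact_mod_cast (Nat.choose_pos (by omega : n ≤ 2 * n)).ne'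
  have hc2 : ((n).choose 2 : ℂ) ≠ 0 := by
    exact_mod_cast (Nat.choose_pos (by omega : 2 ≤ n)).ne'
  rw [mul_zero] at h1
  exact (mul_eq_zero.mp h1).resolve_left (mul_ne_zero hcn hc2)
end
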